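/- arXiv:2511.02348 — 5 statements merged into one kernel-verified Lean document; each statement's English description precedes it below -/
import Mathlib

section
/- More generally, for a nonempty sequence Γ of / -only types and any / -only type δ, Γ → δ is provable in L(/→) iff Γ = α, Δ₁, ..., Δₙ with α = (⋯((δ/βₙ)/βₙ₋₁)/⋯)/β₁ and L(/→) ⊢ Δₖ → βₖ for each k. -/
/-- slash-only types over primitives `P`. `div β α` denotes `β/α`. -/
inductive Tp (P : Type) : Type
  | pr : P → Tp P
  | div : Tp P → Tp P → Tp P

open Tp

/-- The calculus L(/→) with Cut: Axiom, rule (/→), Cut. -/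
inductive Der {P : Type} : List (Tp P) → Tp P → Prop
  | ax (α : Tp P) : Der [α] α
  | slash {Γ Δ Θ : List (Tp P)} {α β γ : Tp P} :
      Der Γ α → Der (Δ ++ β :: Θ) γ → Der (Δ ++ div β α :: (Γ ++ Θ)) γ
  | cut {Γ Θ Δ : List (Tp P)} {α β : Tp P} :
      Der (Γ ++ α :: Θ) β → Der Δ α → Der (Γ ++ (Δ ++ Θ)) β

/-- Cut-free L(/→): only Axiom and (/→). -/
inductive DerCF {P : Type} : List (Tp P) → Tp P → Prop
  | ax (α : Tp P) : DerCF [α] α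
  | slash {Γ Δ Θ : List (Tp P)} {α β γ : Tp P} :
      DerCF Γ α → DerCF (Δ ++ β :: Θ) γ → DerCF (Δ ++ div β α :: (Γ ++ Θ)) γ

/-- `mk δ [β₁, ..., βₙ] = (⋯((δ/βₙ)/βₙ₋₁)/⋯)/β₁`. -/
def mk {P : Type} (δ : Tp P) : List (Tp P) → Tp P
  | [] => δ
  | b :: bs => div (mk δ bs) b

/-- Degree: number of occurrences of `/`. -/
def deg {P : Type} : Tp P → ℕ
  | pr _ => 0
  | div a b => deg a + deg b + 1

private lemma mk_mk {P : Type} (δ : Tp P) (bs bs' : List (Tp P)) :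
    mk (mk δ bs) bs' = mk δ (bs' ++ bs) := by
  induction bs' with
  | nil => rfl
  | cons b t ih => simp [mk, ih]

/-- splitting a flatten at a designated element -/
private lemma flatten_split {α : Type*} :
    ∀ {Ds : List (List α)} {A B : List α} {x : α}, Ds.flatten = A ++ x :: B →
    ∃ Ds₁ E₁ E₂ Ds₂, Ds = Ds₁ ++ (E₁ ++ x :: E₂) :: Ds₂ ∧
      A = Ds₁.flatten ++ E₁ ∧ B = E₂ ++ Ds₂.flatten := by
  intro Ds
  induction Ds with
  | nil => intro A B x h; simp at h
  | cons D Ds ih =>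
    intro A B x h
    simp only [List.flatten_cons] at h
    rcases List.append_eq_append_iff.mp h with ⟨a, hA, hfl⟩ | ⟨c, hD, hc⟩
    · obtain ⟨Ds₁, E₁, E₂, Ds₂, h1, h2, h3⟩ := ih hfl
      exact ⟨D :: Ds₁, E₁, E₂, Ds₂, by simp [h1], by simp [hA, h2], h3⟩
    · cases c with
      | nil =>
        have hfl : Ds.flatten = [] ++ x :: B := by simpa using hc.symm
        obtain ⟨Ds₁, E₁, E₂, Ds₂, h1, h2, h3⟩ := ih hfl
        refine ⟨D :: Ds₁, E₁, E₂, Ds₂, by simp [h1], ?_, h3⟩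
        simp at hD
        simp [hD, ← h2]
      | cons z c' =>
        obtain ⟨rfl, rfl⟩ : x = z ∧ B = c' ++ Ds.flatten := by
          simpa using hc
        exact ⟨[], A, c', Ds, by simp [hD], by simp, rfl⟩

private lemma forall₂_split {α β : Type*} {R : α → β → Prop} :
    ∀ {l₁ : List α} {a : α} {l₂ : List α} {bs : List β},
      List.Forall₂ R (l₁ ++ a :: l₂) bs →
      ∃ bs₁ b bs₂, bs = bs₁ ++ b :: bs₂ ∧ List.Forall₂ R l₁ bs₁ ∧ R a b ∧
        List.Forall₂ R l₂ bs₂ := by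
  intro l₁
  induction l₁ with
  | nil =>
    intro a l₂ bs h
    rcases h with _ | ⟨hb, ht⟩
    exact ⟨[], _, _, rfl, List.Forall₂.nil, hb, ht⟩
  | cons x t ih =>
    intro a l₂ bs h
    rcases h with _ | ⟨hb, ht⟩
    obtain ⟨bs₁, b, bs₂, rfl, h1, h2, h3⟩ := ih ht
    exact ⟨_ :: bs₁, b, bs₂, rfl, List.Forall₂.cons hb h1, h2, h3⟩

private lemma der_main {P : Type} {Γ : List (Tp P)} {δ : Tp P} (h : Der Γ δ) :
    ∃ bs Ds, Γ = mk δ bs :: List.flatten Ds ∧ List.Forall₂ Der Ds bs := by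
  induction h with
  | ax α => exact ⟨[], [], rfl, List.Forall₂.nil⟩
  | @slash Γ Δ Θ α β γ h1 h2 ih1 ih2 =>
    obtain ⟨bs, Ds, heq, hfa⟩ := ih2
    cases Δ with
    | nil =>
      obtain ⟨rfl, rfl⟩ : β = mk γ bs ∧ Θ = Ds.flatten := by simpa using heq
      exact ⟨α :: bs, Γ :: Ds, by simp [mk], List.Forall₂.cons h1 hfa⟩
    | cons x Δ' =>
      obtain ⟨rfl, heq'⟩ : x = mk γ bs ∧ Δ' ++ β :: Θ = Ds.flatten := by simpa using heq
      obtain ⟨Ds₁, E₁, E₂, Ds₂, rfl, rfl, rfl⟩ := flatten_split heq'.symm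
      obtain ⟨bs₁, b, bs₂, rfl, hf1, hd, hf2⟩ := forall₂_split hfa
      refine ⟨bs₁ ++ b :: bs₂, Ds₁ ++ (E₁ ++ div β α :: (Γ ++ E₂)) :: Ds₂, by simp, ?_⟩
      exact List.rel_append hf1 (List.Forall₂.cons (Der.slash h1 hd) hf2)
  | @cut Γ Θ Δ α β h1 h2 ih1 ih2 =>
    obtain ⟨bs, Ds, heq, hfa⟩ := ih1
    cases Γ with
    | nil =>
      obtain ⟨rfl, rfl⟩ : α = mk β bs ∧ Θ = Ds.flatten := by simpa using heq
      obtain ⟨bs', Ds', heq', hfa'⟩ := ih2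
      refine ⟨bs' ++ bs, Ds' ++ Ds, ?_, List.rel_append hfa' hfa⟩
      simp [heq', mk_mk]
    | cons x Γ' =>
      obtain ⟨rfl, heq'⟩ : x = mk β bs ∧ Γ' ++ α :: Θ = Ds.flatten := by simpa using heq
      obtain ⟨Ds₁, E₁, E₂, Ds₂, rfl, rfl, rfl⟩ := flatten_split heq'.symm
      obtain ⟨bs₁, b, bs₂, rfl, hf1, hd, hf2⟩ := forall₂_split hfa
      refine ⟨bs₁ ++ b :: bs₂, Ds₁ ++ (E₁ ++ (Δ ++ E₂)) :: Ds₂, by simp, ?_⟩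
      exact List.rel_append hf1 (List.Forall₂.cons (Der.cut hd h2) hf2)

private lemma der_build {P : Type} {δ : Tp P} :
    ∀ {bs Ds}, List.Forall₂ (@Der P) Ds bs → Der (mk δ bs :: List.flatten Ds) δ := by
  intro bs Ds h
  induction h with
  | nil => exact Der.ax δ
  | @cons D b Ds bs hd _ ih =>
    have := Der.slash (Δ := []) (Θ := Ds.flatten) hd ih
    simpa [mk] using this

/-- Reducibility condition for an arbitrary slash-only succedent `δ`. -/
theorem reducibility_condition_general {P : Type} (δ : Tp P) (Γ : List (Tp P)) (hne : Γ ≠ []) :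
    Der Γ δ ↔
      ∃ (bs : List (Tp P)) (Ds : List (List (Tp P))),
        Ds.length = bs.length ∧
        Γ = mk δ bs :: Ds.flatten ∧
        ∀ p ∈ Ds.zip bs, Der p.1 p.2 := by
  constructor
  · intro h
    obtain ⟨bs, Ds, heq, hfa⟩ := der_main h
    refine ⟨bs, Ds, hfa.length_eq, heq, ?_⟩
    intro p hp
    exact (List.forall₂_iff_zip.mp hfa).2 hp
  · rintro ⟨bs, Ds, hlen, rfl, hz⟩
    exact der_build (List.forall₂_iff_zip.mpr ⟨hlen, fun h => hz _ h⟩)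
end

section
/- In L(/→) restricted to types of degree at most 1, a sequent Γ → S with S primitive and Γ nonempty is provable iff either Γ = S, or Γ = (S/A), Δ for some primitive A with Δ → A provable in the same system. -/
open Tp

/- ====== auxiliary lemmas ====== -/

lemma list_split3 {T : Type} : ∀ {l1 l2 r1 r2 : List T} {a b : T},
    l1 ++ a :: r1 = l2 ++ b :: r2 →
    (l1 = l2 ∧ a = b ∧ r1 = r2) ∨
    (∃ m, l2 = l1 ++ a :: m ∧ r1 = m ++ b :: r2) ∨
    (∃ m, l1 = l2 ++ b :: m ∧ r2 = m ++ a :: r1) := by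
  intro l1
  induction l1 with
  | nil =>
    intro l2 r1 r2 a b h
    cases l2 with
    | nil => simp_all
    | cons x l2 =>
      simp only [List.nil_append, List.cons_append, List.cons.injEq] at h
      exact Or.inr (Or.inl ⟨l2, by simp [h.1], h.2⟩)
  | cons x l1 ih =>
    intro l2 r1 r2 a b h
    cases l2 with
    | nil =>
      simp only [List.cons_append, List.nil_append, List.cons.injEq] at h
      exact Or.inr (Or.inr ⟨l1, by simp [h.1], h.2.symm⟩)
    | cons y l2 =>
      simp only [List.cons_append, List.cons.injEq] at h
      rcases ih h.2 with h1 | ⟨m, h1, h2⟩ | ⟨m, h1, h2⟩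
      · exact Or.inl ⟨by simp [h.1, h1.1], h1.2.1, h1.2.2⟩
      · exact Or.inr (Or.inl ⟨m, by simp [h.1, h1], h2⟩)
      · exact Or.inr (Or.inr ⟨m, by simp [h.1, h1], h2⟩)

lemma list_split2 {T : Type} : ∀ {l1 l2 m r : List T} {a : T},
    l1 ++ l2 = m ++ a :: r →
    (∃ k, l1 = m ++ a :: k ∧ r = k ++ l2) ∨
    (∃ k, m = l1 ++ k ∧ l2 = k ++ a :: r) := by
  intro l1
  induction l1 with
  | nil => intro l2 m r a h; exact Or.inr ⟨m, rfl, by simpa using h⟩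
  | cons x l1 ih =>
    intro l2 m r a h
    cases m with
    | nil =>
      simp only [List.cons_append, List.nil_append, List.cons.injEq] at h
      exact Or.inl ⟨l1, by simp [h.1], h.2.symm⟩
    | cons y m =>
      simp only [List.cons_append, List.cons.injEq] at h
      rcases ih h.2 with ⟨k, h1, h2⟩ | ⟨k, h1, h2⟩
      · exact Or.inl ⟨k, by simp [h.1, h1], h2⟩
      · exact Or.inr ⟨k, by simp [h.1, h1], h2⟩

/-- principal cut: cut a `div b a` into the slash rule that introduced it. -/
lemma cut_div {P : Type} {β a b : Tp P} {D' G T : List (Tp P)}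
    (E1 : DerCF G a) (E2 : DerCF (D' ++ b :: T) β) :
    ∀ {Δ : List (Tp P)} {γ : Tp P}, DerCF Δ γ → γ = div b a →
      DerCF (D' ++ Δ ++ (G ++ T)) β := by
  intro Δ γ D
  induction D with
  | ax δ =>
    rintro rfl
    have := DerCF.slash E1 E2
    simpa [List.append_assoc] using this
  | slash D1 D2 ih1 ih2 =>
    intro h
    rename_i Γ₁ Δ₁ Θ₁ a₁ b₁ γ₁
    have IH := ih2 h
    have := DerCF.slash (Δ := D' ++ Δ₁) (Θ := Θ₁ ++ (G ++ T)) D1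
      (by simpa [List.append_assoc] using IH)
    simpa [List.append_assoc] using this

/-- cut admissibility for the cut-free calculus. -/
lemma cut_adm {P : Type} {α : Tp P} {Δ : List (Tp P)} (D : DerCF Δ α) :
    ∀ {X : List (Tp P)} {β : Tp P}, DerCF X β →
      ∀ {Γ Θ : List (Tp P)}, X = Γ ++ α :: Θ → DerCF (Γ ++ Δ ++ Θ) β := by
  intro X β E
  induction E with
  | ax γ =>
    intro Γ Θ h
    cases Γ with
    | nil =>
      cases Θ with
      | nil => simp only [List.nil_append, List.cons.injEq] at h
               simpa [h.1] using D
      | cons y t => simp at h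
    | cons x t => cases t <;> simp at h
  | slash E1 E2 ih1 ih2 =>
    rename_i Γ₁ Δ₁ Θ₁ a₁ b₁ γ₁
    intro Γ Θ h
    rcases list_split3 h.symm with ⟨h1, h2, h3⟩ | ⟨m, h1, h2⟩ | ⟨m, h1, h2⟩
    ·
      subst h1; subst h3
      exact cut_div E1 E2 D h2
    · -- α in Δ₁ : Δ₁ = Γ ++ α :: m, Θ = m ++ div b₁ a₁ :: (Γ₁ ++ Θ₁)
      subst h1; subst h2
      have IH := ih2 (Γ := Γ) (Θ := m ++ b₁ :: Θ₁) (by simp)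
      have := DerCF.slash (Δ := Γ ++ Δ ++ m) (Θ := Θ₁) E1
        (by simpa [List.append_assoc] using IH)
      simpa [List.append_assoc] using this
    · -- Γ = Δ₁ ++ (div b₁ a₁) :: m, and Γ₁ ++ Θ₁ = m ++ α :: Θ
      subst h1
      rcases list_split2 h2 with ⟨k, hk1, hk2⟩ | ⟨k, hk1, hk2⟩
      · -- α in Γ₁ : Γ₁ = m ++ α :: k, Θ₁-side: Θ = k ++ Θ₁
        subst hk1; subst hk2
        have IH := ih1 (Γ := m) (Θ := k) rfl
        have := DerCF.slash IH E2
        simpa [List.append_assoc] using this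
      · -- α in Θ₁ : m = Γ₁ ++ k, Θ₁ = k ++ α :: Θ
        subst hk1; subst hk2
        have IH := ih2 (Γ := Δ₁ ++ b₁ :: k) (Θ := Θ) (by simp)
        have := DerCF.slash (Δ := Δ₁) (Θ := k ++ Δ ++ Θ) E1
          (by simpa [List.append_assoc] using IH)
        simpa [List.append_assoc] using this

lemma der_of_cf {P : Type} {Γ : List (Tp P)} {α : Tp P} (h : DerCF Γ α) : Der Γ α := by
  induction h with
  | ax => exact Der.ax _
  | slash _ _ ih1 ih2 => exact Der.slash ih1 ih2

lemma cf_of_der {P : Type} {Γ : List (Tp P)} {α : Tp P} (h : Der Γ α) : DerCF Γ α := by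
  induction h with
  | ax => exact DerCF.ax _
  | slash _ _ ih1 ih2 => exact DerCF.slash ih1 ih2
  | cut _ _ ih1 ih2 => simpa [List.append_assoc] using cut_adm ih2 ih1 rfl

lemma deg_zero {P : Type} {t : Tp P} (h : deg t = 0) : ∃ p, t = pr p := by
  cases t with
  | pr p => exact ⟨p, rfl⟩
  | div a b => simp [deg] at h

lemma cf_main {P : Type} (S : P) :
    ∀ {X : List (Tp P)} {γ : Tp P}, DerCF X γ → γ = pr S →
      (∀ t ∈ X, deg t ≤ 1) →
      X = [pr S] ∨
        ∃ (A : P) (Δ : List (Tp P)), X = div (pr S) (pr A) :: Δ ∧ Der Δ (pr A) := by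
  intro X γ E
  induction E with
  | ax δ => rintro rfl _; exact Or.inl rfl
  | slash E1 E2 ih1 ih2 =>
    rename_i Γ₁ Δ₁ Θ₁ a₁ b₁ γ₁
    rintro rfl hdeg
    have hdiv : deg (div b₁ a₁) ≤ 1 := hdeg _ (by simp)
    have hb : deg b₁ = 0 := by simp [deg] at hdiv; omega
    have ha : deg a₁ = 0 := by simp [deg] at hdiv; omega
    obtain ⟨pb, rfl⟩ := deg_zero hb
    obtain ⟨pa, rfl⟩ := deg_zero ha
    have hdeg2 : ∀ t ∈ Δ₁ ++ pr pb :: Θ₁, deg t ≤ 1 := by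
      intro t ht
      simp only [List.mem_append, List.mem_cons] at ht
      rcases ht with h | h | h
      · exact hdeg t (by simp [h])
      · subst h; simp [deg]
      · exact hdeg t (by simp [h])
    rcases ih2 rfl hdeg2 with h | ⟨A, Δ', h, hd⟩
    · -- Δ₁ ++ pr pb :: Θ₁ = [pr S] : Δ₁ = [], pb = S, Θ₁ = []
      cases Δ₁ with
      | nil =>
        simp only [List.nil_append, List.cons.injEq] at h
        obtain ⟨h1, rfl⟩ := h
        injection h1 with h1
        subst h1
        exact Or.inr ⟨pa, Γ₁ ++ [], rfl, by simpa using der_of_cf E1⟩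
      | cons x t => cases t <;> simp_all
    · -- Δ₁ ++ pr pb :: Θ₁ = div (pr S) (pr A) :: Δ'
      cases Δ₁ with
      | nil => simp only [List.nil_append, List.cons.injEq] at h; exact absurd h.1 (by simp)
      | cons x Δ₀ =>
        simp only [List.cons_append, List.cons.injEq] at h
        obtain ⟨rfl, h2⟩ := h
        refine Or.inr ⟨A, Δ₀ ++ div (pr pb) (pr pa) :: (Γ₁ ++ Θ₁), by simp, ?_⟩
        have := Der.slash (der_of_cf E1) (Δ := Δ₀) (Θ := Θ₁) (β := pr pb)
          (h2 ▸ hd : Der (Δ₀ ++ pr pb :: Θ₁) (pr A))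
        exact this

/-- Reducibility in L(/→) with all antecedent types of degree at most 1. -/
theorem degree_one_reducibility {P : Type} (S : P) (Γ : List (Tp P))
    (hne : Γ ≠ []) (hdeg : ∀ γ ∈ Γ, deg γ ≤ 1) :
    Der Γ (pr S) ↔
      Γ = [pr S] ∨
      ∃ (A : P) (Δ : List (Tp P)), Γ = div (pr S) (pr A) :: Δ ∧ Der Δ (pr A) := by
  constructor
  · intro h
    exact cf_main S (cf_of_der h) rfl hdeg
  · rintro (rfl | ⟨A, Δ, rfl, hd⟩)
    · exact Der.ax _
    · have := Der.slash (Δ := []) (Θ := []) hd (Der.ax (pr S))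
      simpa using this
end

section
/- In L(/→, \→) restricted to types of degree at most 1 over / and \, a sequent Γ → S with S primitive is provable iff Γ = S, or Γ = (S/A), Δ, or Γ = Δ, (A\S), for some primitive A and sequence Δ with Δ → A provable in the same system. -/
/-- Types over primitives `P` with `/` and `\`. `div β α` is `β/α`; `bsl α β` is `α\β`. -/
inductive Tp2 (P : Type) : Type
  | pr : P → Tp2 P
  | div : Tp2 P → Tp2 P → Tp2 P
  | bsl : Tp2 P → Tp2 P → Tp2 P

open Tp2

/-- The calculus L(/→, \→) with Cut. -/
inductive Der2 {P : Type} : List (Tp2 P) → Tp2 P → Prop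
  | ax (α : Tp2 P) : Der2 [α] α
  | slash {Γ Δ Θ : List (Tp2 P)} {α β γ : Tp2 P} :
      Der2 Γ α → Der2 (Δ ++ β :: Θ) γ → Der2 (Δ ++ div β α :: (Γ ++ Θ)) γ
  | bslash {Γ Δ Θ : List (Tp2 P)} {α β γ : Tp2 P} :
      Der2 Γ α → Der2 (Δ ++ β :: Θ) γ → Der2 (Δ ++ (Γ ++ bsl α β :: Θ)) γ
  | cut {Γ Θ Δ : List (Tp2 P)} {α β : Tp2 P} :
      Der2 (Γ ++ α :: Θ) β → Der2 Δ α → Der2 (Γ ++ (Δ ++ Θ)) β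

/-- Cut-free L(/→, \→). -/
inductive DerCF2 {P : Type} : List (Tp2 P) → Tp2 P → Prop
  | ax (α : Tp2 P) : DerCF2 [α] α
  | slash {Γ Δ Θ : List (Tp2 P)} {α β γ : Tp2 P} :
      DerCF2 Γ α → DerCF2 (Δ ++ β :: Θ) γ → DerCF2 (Δ ++ div β α :: (Γ ++ Θ)) γ
  | bslash {Γ Δ Θ : List (Tp2 P)} {α β γ : Tp2 P} :
      DerCF2 Γ α → DerCF2 (Δ ++ β :: Θ) γ → DerCF2 (Δ ++ (Γ ++ bsl α β :: Θ)) γ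

/-- Degree: number of occurrences of connectives. -/
def deg2 {P : Type} : Tp2 P → ℕ
  | pr _ => 0
  | div a b => deg2 a + deg2 b + 1
  | bsl a b => deg2 a + deg2 b + 1

lemma deg2_eq_zero {P : Type} {t : Tp2 P} (h : deg2 t = 0) : ∃ p, t = pr p := by
  cases t <;> simp [deg2] at h ⊢

lemma DerCF2.toDer2 {P : Type} {Γ : List (Tp2 P)} {γ : Tp2 P} (h : DerCF2 Γ γ) :
    Der2 Γ γ := by
  induction h with
  | ax => exact Der2.ax _
  | slash _ _ ih1 ih2 => exact Der2.slash ih1 ih2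
  | bslash _ _ ih1 ih2 => exact Der2.bslash ih1 ih2

/-- Cut admissibility in the cut-free calculus. -/
lemma cutCF {P : Type} {Ξ : List (Tp2 P)} {α : Tp2 P} (h2 : DerCF2 Ξ α) :
    ∀ {Γ Θ : List (Tp2 P)} {β : Tp2 P},
      DerCF2 (Γ ++ α :: Θ) β → DerCF2 (Γ ++ (Ξ ++ Θ)) β := by
  induction h2 with
  | ax => intro Γ Θ β h; simpa using h
  | @slash G D T a b _ h1 _ _ ih2 =>
      intro Γ Θ β h
      have h' := ih2 h
      have h'' : DerCF2 ((Γ ++ D) ++ b :: (T ++ Θ)) β := by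
        simpa [List.append_assoc] using h'
      have := DerCF2.slash h1 h''
      simpa [List.append_assoc] using this
  | @bslash G D T a b _ h1 _ _ ih2 =>
      intro Γ Θ β h
      have h' := ih2 h
      have h'' : DerCF2 ((Γ ++ D) ++ b :: (T ++ Θ)) β := by
        simpa [List.append_assoc] using h'
      have := DerCF2.bslash h1 h''
      simpa [List.append_assoc] using this

lemma Der2.toCF {P : Type} {Γ : List (Tp2 P)} {γ : Tp2 P} (h : Der2 Γ γ) :
    DerCF2 Γ γ := by
  induction h with
  | ax => exact DerCF2.ax _
  | slash _ _ ih1 ih2 => exact DerCF2.slash ih1 ih2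
  | bslash _ _ ih1 ih2 => exact DerCF2.bslash ih1 ih2
  | cut _ _ ih1 ih2 => exact cutCF ih2 ih1

lemma mainCF {P : Type} {Γ : List (Tp2 P)} {γ : Tp2 P} (h : DerCF2 Γ γ) :
    ∀ S : P, γ = pr S → (∀ x ∈ Γ, deg2 x ≤ 1) →
      Γ = [pr S] ∨
      (∃ (A : P) (Δ : List (Tp2 P)), Γ = div (pr S) (pr A) :: Δ ∧ Der2 Δ (pr A)) ∨
      (∃ (A : P) (Δ : List (Tp2 P)), Γ = Δ ++ [bsl (pr A) (pr S)] ∧ Der2 Δ (pr A)) := by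
  induction h with
  | ax => intro S hS _; subst hS; exact Or.inl rfl
  | @slash G D T a b g h1 h2 ih1 ih2 =>
      intro S hS hdeg
      subst hS
      -- degree: div b a ∈ antecedent
      have hdba : deg2 (div b a) ≤ 1 := hdeg _ (by simp)
      have hb0 : deg2 b = 0 := by simp [deg2] at hdba; omega
      have ha0 : deg2 a = 0 := by simp [deg2] at hdba; omega
      obtain ⟨pb, rfl⟩ := deg2_eq_zero hb0
      obtain ⟨pa, rfl⟩ := deg2_eq_zero ha0
      have hdeg' : ∀ x ∈ D ++ pr pb :: T, deg2 x ≤ 1 := by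
        intro x hx
        simp only [List.mem_append, List.mem_cons] at hx
        rcases hx with hx | hx | hx
        · exact hdeg x (by simp [hx])
        · subst hx; simp [deg2]
        · exact hdeg x (by simp [hx])
      rcases ih2 S rfl hdeg' with h0 | ⟨A, Δ₂, hEq, hA⟩ | ⟨A, Δ₂, hEq, hA⟩
      · -- D ++ pr pb :: T = [pr S]
        rcases D with _ | ⟨d, D'⟩
        · simp at h0
          obtain ⟨hb, hT⟩ := h0
          subst hT
          right; left
          refine ⟨pa, G, by simp [hb], h1.toDer2⟩
        · simp at h0
      · -- D ++ pr pb :: T = div (pr S) (pr A) :: Δ₂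
        rcases D with _ | ⟨d, D'⟩
        · simp at hEq
        · simp only [List.cons_append, List.cons.injEq] at hEq
          obtain ⟨hd, hEq'⟩ := hEq
          subst hd
          right; left
          refine ⟨A, D' ++ div (pr pb) (pr pa) :: (G ++ T), by simp, ?_⟩
          have hA' : Der2 (D' ++ pr pb :: T) (pr A) := hEq' ▸ hA
          exact Der2.slash h1.toDer2 hA'
      · -- D ++ pr pb :: T = Δ₂ ++ [bsl (pr A) (pr S)]
        rcases T.eq_nil_or_concat with rfl | ⟨T', x, rfl⟩
        · have := List.append_inj' hEq rfl
          simp at this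
        · have hEq2 : (D ++ pr pb :: T') ++ [x] = Δ₂ ++ [bsl (pr A) (pr S)] := by
            simpa using hEq
          obtain ⟨hΔ₂, hx⟩ := List.append_inj' hEq2 rfl
          simp at hx
          subst hx
          right; right
          refine ⟨A, D ++ div (pr pb) (pr pa) :: (G ++ T'), by simp, ?_⟩
          have hA' : Der2 (D ++ pr pb :: T') (pr A) := hΔ₂ ▸ hA
          exact Der2.slash h1.toDer2 hA'
  | @bslash G D T a b g h1 h2 ih1 ih2 =>
      intro S hS hdeg
      subst hS
      have hdba : deg2 (bsl a b) ≤ 1 := hdeg _ (by simp)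
      have hb0 : deg2 b = 0 := by simp [deg2] at hdba; omega
      have ha0 : deg2 a = 0 := by simp [deg2] at hdba; omega
      obtain ⟨pb, rfl⟩ := deg2_eq_zero hb0
      obtain ⟨pa, rfl⟩ := deg2_eq_zero ha0
      have hdeg' : ∀ x ∈ D ++ pr pb :: T, deg2 x ≤ 1 := by
        intro x hx
        simp only [List.mem_append, List.mem_cons] at hx
        rcases hx with hx | hx | hx
        · exact hdeg x (by simp [hx])
        · subst hx; simp [deg2]
        · exact hdeg x (by simp [hx])
      rcases ih2 S rfl hdeg' with h0 | ⟨A, Δ₂, hEq, hA⟩ | ⟨A, Δ₂, hEq, hA⟩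
      · rcases D with _ | ⟨d, D'⟩
        · simp at h0
          obtain ⟨hb, hT⟩ := h0
          subst hT
          right; right
          refine ⟨pa, G, by simp [hb], h1.toDer2⟩
        · simp at h0
      · rcases D with _ | ⟨d, D'⟩
        · simp at hEq
        · simp only [List.cons_append, List.cons.injEq] at hEq
          obtain ⟨hd, hEq'⟩ := hEq
          subst hd
          right; left
          refine ⟨A, D' ++ (G ++ bsl (pr pa) (pr pb) :: T), by simp, ?_⟩
          have hA' : Der2 (D' ++ pr pb :: T) (pr A) := hEq' ▸ hA
          exact Der2.bslash h1.toDer2 hA'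
      · rcases T.eq_nil_or_concat with rfl | ⟨T', x, rfl⟩
        · have := List.append_inj' hEq rfl
          simp at this
        · have hEq2 : (D ++ pr pb :: T') ++ [x] = Δ₂ ++ [bsl (pr A) (pr S)] := by
            simpa using hEq
          obtain ⟨hΔ₂, hx⟩ := List.append_inj' hEq2 rfl
          simp at hx
          subst hx
          right; right
          refine ⟨A, D ++ (G ++ bsl (pr pa) (pr pb) :: T'), by simp, ?_⟩
          have hA' : Der2 (D ++ pr pb :: T') (pr A) := hΔ₂ ▸ hA
          exact Der2.bslash h1.toDer2 hA'

/-- Reducibility in L(/→, \→) with all antecedent types of degree at most 1. -/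
theorem degree_one_reducibility_two_sided {P : Type} (S : P) (Γ : List (Tp2 P))
    (hne : Γ ≠ []) (hdeg : ∀ γ ∈ Γ, deg2 γ ≤ 1) :
    Der2 Γ (pr S) ↔
      Γ = [pr S] ∨
      (∃ (A : P) (Δ : List (Tp2 P)), Γ = div (pr S) (pr A) :: Δ ∧ Der2 Δ (pr A)) ∨
      (∃ (A : P) (Δ : List (Tp2 P)), Γ = Δ ++ [bsl (pr A) (pr S)] ∧ Der2 Δ (pr A)) := by
  constructor
  · intro h
    exact mainCF h.toCF S rfl hdeg
  · rintro (rfl | ⟨A, Δ, rfl, hA⟩ | ⟨A, Δ, rfl, hA⟩)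
    · exact Der2.ax _
    · have := Der2.slash (Δ := []) (Θ := []) hA (Der2.ax (pr S))
      simpa using this
    · have := Der2.bslash (Δ := []) (Θ := []) hA (Der2.ax (pr S))
      simpa using this
end

section
/- L(/→)-grammars with types restricted to degree at most 1 recognise exactly the ε-free regular languages. -/
open Tp

/-- A Lambek grammar over slash-only types: primitive types `P`, alphabet `V`,
distinguished primitive type `S`, finite type assignment `f`. -/
structure LGrammar (P V : Type) where
  S : P
  f : V → Set (Tp P)
  fin : ∀ a : V, (f a).Finite

/-- The language recognised by a Lambek grammar. -/
def LGrammar.Lang {P V : Type} (G : LGrammar P V) : Set (List V) :=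
  {w | ∃ Γ : List (Tp P), List.Forall₂ (fun a α => α ∈ G.f a) w Γ ∧ Der Γ (pr G.S)}

/-- A right-regular grammar: productions `A → aB` (`rule`) and `A → a` (`term`). -/
structure RegGrammar (N T : Type) where
  S : N
  rule : N → T → N → Prop
  term : N → T → Prop

/-- Generation relation of a right-regular grammar. -/
inductive RegGen {N T : Type} (G : RegGrammar N T) : N → List T → Prop
  | term {A : N} {a : T} : G.term A a → RegGen G A [a]
  | step {A B : N} {a : T} {w : List T} : G.rule A a B → RegGen G B w → RegGen G A (a :: w)

/-- The language generated by a right-regular grammar. -/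
def RegGrammar.Lang {N T : Type} (G : RegGrammar N T) : Set (List T) :=
  {w | RegGen G G.S w}

/-!
Interpret types in the language model over the alphabet `Tp P` in which a primitive `A` denotes
the set of chains `A/B₁, B₁/B₂, …, Bₙ₋₁/Bₙ, Bₙ`. There every type of degree at most one contains
its own one-letter word, so by soundness of L(/→) for language models a sequent of such types
derives a primitive `S` only if it is a chain from `S`; chains are clearly derivable. A chain
over a word is a derivation of that word in the right-regular grammar with rules `A → aB` for
`A/B ∈ f(a)` and `A → a` for `A ∈ f(a)`, and every right-regular grammar arises in this way.
-/

theorem List.Forall₂.exists_mem_left_of_mem_right {α β : Type} {R : α → β → Prop}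
    {l : List α} {u : List β} (h : List.Forall₂ R l u) {b : β} (hb : b ∈ u) :
    ∃ a ∈ l, R a b := by
  induction h with
  | nil => cases hb
  | @cons a _ _ _ hab _ ih =>
    rcases List.mem_cons.1 hb with rfl | hb
    · exact ⟨a, List.mem_cons_self, hab⟩
    · obtain ⟨a', ha', hr⟩ := ih hb
      exact ⟨a', List.mem_cons_of_mem _ ha', hr⟩

namespace Tp

variable {P X : Type}

def interp (v : P → Language X) : Tp P → Language X
  | pr A => v A
  | div β α => {x | ∀ y ∈ interp v α, x ++ y ∈ interp v β}

theorem interp_div_mul_le (v : P → Language X) (β α : Tp P) :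
    interp v (div β α) * interp v α ≤ interp v β := by
  rintro _ ⟨x, hx, y, hy, rfl⟩
  exact hx y hy

end Tp

theorem Der.prod_interp_le {P X : Type} (v : P → Language X) {Γ : List (Tp P)} {γ : Tp P}
    (h : Der Γ γ) : (Γ.map (interp v)).prod ≤ interp v γ := by
  induction h with
  | ax α => simp
  | @slash Γ Δ Θ α β γ _ _ ihΓ ihΔ =>
    calc _ = (Δ.map (interp v)).prod *
          (interp v (div β α) * (Γ.map (interp v)).prod * (Θ.map (interp v)).prod) := by
          simp [mul_assoc]
      _ ≤ (Δ.map (interp v)).prod * (interp v β * (Θ.map (interp v)).prod) := by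
          gcongr
          exact (mul_le_mul_right ihΓ _).trans (interp_div_mul_le v β α)
      _ ≤ interp v γ := by simpa [mul_assoc] using ihΔ
  | @cut Γ Θ Δ α β _ _ ihΓ ihΔ =>
    calc _ = (Γ.map (interp v)).prod * ((Δ.map (interp v)).prod * (Θ.map (interp v)).prod) := by
          simp
      _ ≤ (Γ.map (interp v)).prod * (interp v α * (Θ.map (interp v)).prod) := by gcongr
      _ ≤ interp v β := by simpa using ihΓ

/-- `SlashChain A Γ` says that `Γ` is `A/B₁, B₁/B₂, …, Bₙ₋₁/Bₙ, Bₙ` (with `n ≥ 0`). -/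
inductive SlashChain {P : Type} : P → List (Tp P) → Prop
  | single (A : P) : SlashChain A [pr A]
  | cons {A B : P} {Γ : List (Tp P)} : SlashChain B Γ → SlashChain A (div (pr A) (pr B) :: Γ)

namespace SlashChain

variable {P : Type}

theorem der {A : P} {Γ : List (Tp P)} (h : SlashChain A Γ) : Der Γ (pr A) := by
  induction h with
  | single A => exact Der.ax _
  | @cons A B Γ _ ih => simpa using Der.slash (Δ := []) (Θ := []) ih (Der.ax (pr A))

def model (A : P) : Language (Tp P) := {Γ | SlashChain A Γ}

theorem singleton_mem_interp_model {τ : Tp P} (h : deg τ ≤ 1) : [τ] ∈ interp model τ := by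
  match τ, h with
  | pr A, _ => exact single A
  | div (pr A) (pr B), _ => exact fun Γ hΓ => cons hΓ
  | div (div _ _) _, h | div _ (div _ _), h => simp [deg] at h

theorem self_mem_prod_map_interp_model {Γ : List (Tp P)} (h : ∀ τ ∈ Γ, deg τ ≤ 1) :
    Γ ∈ (Γ.map (interp model)).prod := by
  induction Γ with
  | nil => exact Language.nil_mem_one
  | cons τ Γ ih =>
    simp only [List.forall_mem_cons] at h
    exact Language.append_mem_mul (singleton_mem_interp_model h.1) (ih h.2)

theorem of_der {A : P} {Γ : List (Tp P)} (h : Der Γ (pr A)) (hdeg : ∀ τ ∈ Γ, deg τ ≤ 1) :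
    SlashChain A Γ :=
  h.prod_interp_le model (self_mem_prod_map_interp_model hdeg)

end SlashChain

theorem der_pr_iff_slashChain {P : Type} {A : P} {Γ : List (Tp P)} (hdeg : ∀ τ ∈ Γ, deg τ ≤ 1) :
    Der Γ (pr A) ↔ SlashChain A Γ :=
  ⟨fun h => .of_der h hdeg, SlashChain.der⟩

namespace LGrammar

variable {P V : Type}

def toRegGrammar (G : LGrammar P V) : RegGrammar P V where
  S := G.S
  rule A a B := div (pr A) (pr B) ∈ G.f a
  term A a := pr A ∈ G.f a

theorem regGen_toRegGrammar_iff (G : LGrammar P V) {A : P} {w : List V} :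
    RegGen G.toRegGrammar A w ↔
      ∃ Γ, List.Forall₂ (fun a α => α ∈ G.f a) w Γ ∧ SlashChain A Γ := by
  constructor
  · intro h
    induction h with
    | @term A a h => exact ⟨[pr A], .cons h .nil, .single A⟩
    | @step A B a w h _ ih =>
      obtain ⟨Γ, hw, hΓ⟩ := ih
      exact ⟨div (pr A) (pr B) :: Γ, .cons h hw, .cons hΓ⟩
  · rintro ⟨Γ, hw, hΓ⟩
    induction hΓ generalizing w with
    | single A =>
      obtain ⟨a, _, ha, hnil, rfl⟩ := List.forall₂_cons_right_iff.1 hw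
      rw [List.forall₂_nil_right_iff.1 hnil]
      exact .term ha
    | cons _ ih =>
      obtain ⟨a, _, ha, hw', rfl⟩ := List.forall₂_cons_right_iff.1 hw
      exact .step ha (ih hw')

theorem lang_eq_toRegGrammar_lang (G : LGrammar P V) (hdeg : ∀ a : V, ∀ α ∈ G.f a, deg α ≤ 1) :
    G.Lang = G.toRegGrammar.Lang := by
  ext w
  simp only [LGrammar.Lang, RegGrammar.Lang, Set.mem_ofPred_eq]
  rw [show G.toRegGrammar.S = G.S from rfl, regGen_toRegGrammar_iff]
  refine exists_congr fun Γ => and_congr_right fun hw => der_pr_iff_slashChain fun τ hτ => ?_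
  obtain ⟨a, -, ha⟩ := hw.exists_mem_left_of_mem_right hτ
  exact hdeg a τ ha

end LGrammar

namespace RegGrammar

variable {N V : Type}

def toLGrammar [Finite N] (G : RegGrammar N V) : LGrammar N V where
  S := G.S
  f a := pr '' {A | G.term A a} ∪ (fun p : N × N => div (pr p.1) (pr p.2)) '' {p | G.rule p.1 a p.2}
  fin _ := ((Set.toFinite _).image _).union ((Set.toFinite _).image _)

variable [Finite N] (G : RegGrammar N V)

theorem deg_le_one_of_mem_toLGrammar : ∀ a : V, ∀ α ∈ G.toLGrammar.f a, deg α ≤ 1 := by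
  rintro a α ( ⟨A, -, rfl⟩ | ⟨p, -, rfl⟩) <;> simp [deg]

theorem toLGrammar_toRegGrammar : G.toLGrammar.toRegGrammar = G := by
  cases G
  simp [toLGrammar, LGrammar.toRegGrammar]

end RegGrammar

theorem degree_one_lambek_eq_regular_general {V : Type} (L : Set (List V)) :
    (∃ (P : Type) (_ : Finite P) (G : LGrammar P V),
        (∀ a : V, ∀ α ∈ G.f a, deg α ≤ 1) ∧ G.Lang = L) ↔
    (∃ (N : Type) (_ : Finite N) (G' : RegGrammar N V), G'.Lang = L) := by
  constructor
  · rintro ⟨P, hP, G, hdeg, rfl⟩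
    exact ⟨P, hP, G.toRegGrammar, (G.lang_eq_toRegGrammar_lang hdeg).symm⟩
  · rintro ⟨N, hN, G', rfl⟩
    refine ⟨N, hN, G'.toLGrammar, G'.deg_le_one_of_mem_toLGrammar, ?_⟩
    rw [G'.toLGrammar.lang_eq_toRegGrammar_lang G'.deg_le_one_of_mem_toLGrammar,
      G'.toLGrammar_toRegGrammar]

/-- L(/→)-grammars with types of degree ≤ 1 recognise exactly the ε-free regular languages. -/
theorem degree_one_lambek_eq_regular {V : Type} [Finite V] (L : Set (List V)) :
    (∃ (P : Type) (_ : Finite P) (G : LGrammar P V),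
        (∀ a : V, ∀ α ∈ G.f a, deg α ≤ 1) ∧ G.Lang = L) ↔
    (∃ (N : Type) (_ : Finite N) (G' : RegGrammar N V), G'.Lang = L) :=
  degree_one_lambek_eq_regular_general L
end

section
/- Every ε-free linear context-free language is recognised by an L(/→, \→)-grammar with types of degree at most 1, via the assignment A/B ∈ f(a) iff A → aB ∈ P, B\A ∈ f(a) iff A → Ba ∈ P, and A ∈ f(a) iff A → a ∈ P. -/
open Tp2

/-- A Lambek grammar over types with `/` and `\`. -/
structure LGrammar2 (P V : Type) where
  S : P
  f : V → Set (Tp2 P)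
  fin : ∀ a : V, (f a).Finite

/-- The language recognised by an L(/→, \→)-grammar. -/
def LGrammar2.Lang {P V : Type} (G : LGrammar2 P V) : Set (List V) :=
  {w | ∃ Γ : List (Tp2 P), List.Forall₂ (fun a α => α ∈ G.f a) w Γ ∧ Der2 Γ (pr G.S)}

/-- A linear context-free grammar: productions `A → aB`, `A → Ba`, `A → a`. -/
structure LinGrammar (N T : Type) where
  S : N
  rule_r : N → T → N → Prop
  rule_l : N → N → T → Prop
  term : N → T → Prop

/-- Generation relation of a linear context-free grammar. -/
inductive LinGen {N T : Type} (G : LinGrammar N T) : N → List T → Prop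
  | term {A : N} {a : T} : G.term A a → LinGen G A [a]
  | right {A B : N} {a : T} {w : List T} : G.rule_r A a B → LinGen G B w → LinGen G A (a :: w)
  | left {A B : N} {a : T} {w : List T} : G.rule_l A B a → LinGen G B w → LinGen G A (w ++ [a])

/-- The language generated by a linear context-free grammar. -/
def LinGrammar.Lang {N T : Type} (G : LinGrammar N T) : Set (List T) :=
  {w | LinGen G G.S w}

namespace Tp2

variable {P T : Type}

def interp (v : P → Language T) : Tp2 P → Language T
  | pr A => v A
  | div β α => {w | ∀ u ∈ interp v α, w ++ u ∈ interp v β}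
  | bsl α β => {w | ∀ u ∈ interp v α, u ++ w ∈ interp v β}

variable (v : P → Language T) (α β : Tp2 P)

theorem interp_div_mul_le : interp v (div β α) * interp v α ≤ interp v β := by
  rintro _ ⟨w, hw, u, hu, rfl⟩
  exact hw u hu

theorem mul_interp_bsl_le : interp v α * interp v (bsl α β) ≤ interp v β := by
  rintro _ ⟨u, hu, w, hw, rfl⟩
  exact hw u hu

end Tp2

namespace Der2

variable {P : Type} {Γ : List (Tp2 P)} {α β γ : Tp2 P}

theorem prod_map_interp_le {T : Type} (v : P → Language T) (h : Der2 Γ γ) :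
    (Γ.map (interp v)).prod ≤ interp v γ := by
  induction h with
  | ax α => simp
  | @slash Γ Δ Θ α β γ _ _ ihΓ ihΔ =>
    calc _ = (Δ.map (interp v)).prod * (interp v (div β α) * (Γ.map (interp v)).prod) *
            (Θ.map (interp v)).prod := by simp [mul_assoc]
      _ ≤ (Δ.map (interp v)).prod * interp v β * (Θ.map (interp v)).prod := by
          gcongr; exact (mul_le_mul' le_rfl ihΓ).trans (interp_div_mul_le v α β)
      _ ≤ interp v γ := by simpa [mul_assoc] using ihΔ
  | @bslash Γ Δ Θ α β γ _ _ ihΓ ihΔ =>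
    calc _ = (Δ.map (interp v)).prod * ((Γ.map (interp v)).prod * interp v (bsl α β)) *
            (Θ.map (interp v)).prod := by simp [mul_assoc]
      _ ≤ (Δ.map (interp v)).prod * interp v β * (Θ.map (interp v)).prod := by
          gcongr; exact (mul_le_mul' ihΓ le_rfl).trans (mul_interp_bsl_le v α β)
      _ ≤ interp v γ := by simpa [mul_assoc] using ihΔ
  | @cut Γ Θ Δ α β _ _ ihα ihΔ =>
    calc _ = (Γ.map (interp v)).prod * (Δ.map (interp v)).prod * (Θ.map (interp v)).prod := by
            simp [mul_assoc]
      _ ≤ (Γ.map (interp v)).prod * interp v α * (Θ.map (interp v)).prod := by gcongr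
      _ ≤ interp v β := by simpa [mul_assoc] using ihα

theorem div_cons (h : Der2 Γ α) : Der2 (div β α :: Γ) β := by
  simpa using slash (Δ := []) (Θ := []) h (ax β)

theorem append_bsl (h : Der2 Γ α) : Der2 (Γ ++ [bsl α β]) β := by
  simpa using bslash (Δ := []) (Θ := []) h (ax β)

end Der2

theorem Language.mem_prod_of_forall₂ {T : Type} :
    ∀ {w : List T} {Ls : List (Language T)}, List.Forall₂ (fun a L => [a] ∈ L) w Ls → w ∈ Ls.prod
  | _, _, .nil => Language.nil_mem_one
  | a :: _, _, .cons ha hw => by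
    simpa using Language.append_mem_mul ha (mem_prod_of_forall₂ hw)

namespace LinGen

variable {N T : Type} {G : LinGrammar N T} {f : T → Set (Tp2 N)} {A : N} {w : List T}

theorem exists_forall₂_der2 (hr : ∀ {A a B}, G.rule_r A a B → div (pr A) (pr B) ∈ f a)
    (hl : ∀ {A B a}, G.rule_l A B a → bsl (pr B) (pr A) ∈ f a)
    (ht : ∀ {A a}, G.term A a → pr A ∈ f a) (h : LinGen G A w) :
    ∃ Γ, List.Forall₂ (fun a α => α ∈ f a) w Γ ∧ Der2 Γ (pr A) := by
  induction h with
  | term hA => exact ⟨[pr _], .cons (ht hA) .nil, .ax _⟩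
  | right hAB _ ih =>
    obtain ⟨Γ, hw, hΓ⟩ := ih
    exact ⟨_ :: Γ, .cons (hr hAB) hw, hΓ.div_cons⟩
  | left hAB _ ih =>
    obtain ⟨Γ, hw, hΓ⟩ := ih
    exact ⟨Γ ++ [_], List.rel_append hw (.cons (hl hAB) .nil), hΓ.append_bsl⟩

theorem of_forall₂_der2
    (hf : ∀ a, ∀ α ∈ f a, [a] ∈ interp (fun B => {u | LinGen G B u}) α) {Γ : List (Tp2 N)}
    (hw : List.Forall₂ (fun a α => α ∈ f a) w Γ) (hΓ : Der2 Γ (pr A)) : LinGen G A w :=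
  hΓ.prod_map_interp_le _ <|
    Language.mem_prod_of_forall₂ <| List.forall₂_map_right_iff.2 <| hw.imp hf

end LinGen

theorem linear_to_lambek_general {N T : Type} (G : LinGrammar N T)
    (LG : LGrammar2 N T) (hS : LG.S = G.S)
    (hf : ∀ a : T, LG.f a =
      {α | (∃ A B : N, G.rule_r A a B ∧ α = div (pr A) (pr B)) ∨
           (∃ A B : N, G.rule_l A B a ∧ α = bsl (pr B) (pr A)) ∨
           (∃ A : N, G.term A a ∧ α = pr A)}) :
    LG.Lang = G.Lang := by
  ext w
  simp only [LGrammar2.Lang, LinGrammar.Lang, Set.mem_ofPred_eq, hS]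
  refine ⟨fun ⟨Γ, hw, hΓ⟩ => LinGen.of_forall₂_der2 ?_ hw hΓ,
    LinGen.exists_forall₂_der2 ?_ ?_ ?_⟩
  · intro a α hα
    rw [hf a] at hα
    rcases hα with ⟨A, B, hAB, rfl⟩ | ⟨A, B, hAB, rfl⟩ | ⟨A, hA, rfl⟩
    · exact fun u hu => .right hAB hu
    · exact fun u hu => .left hAB hu
    · exact .term hA
  · intro A a B hAB; rw [hf a]; exact .inl ⟨A, B, hAB, rfl⟩
  · intro A B a hAB; rw [hf a]; exact .inr (.inl ⟨A, B, hAB, rfl⟩)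
  · intro A a hA; rw [hf a]; exact .inr (.inr ⟨A, hA, rfl⟩)

/-- Every ε-free linear context-free language is recognised by the L(/→, \→)-grammar with
degree-≤1 types given by `A/B ∈ f a` iff `A → aB`, `B\A ∈ f a` iff `A → Ba`,
`A ∈ f a` iff `A → a`. -/
theorem linear_to_lambek {N T : Type} [Finite N] [Finite T] (G : LinGrammar N T)
    (LG : LGrammar2 N T) (hS : LG.S = G.S)
    (hf : ∀ a : T, LG.f a =
      {α | (∃ A B : N, G.rule_r A a B ∧ α = div (pr A) (pr B)) ∨
           (∃ A B : N, G.rule_l A B a ∧ α = bsl (pr B) (pr A)) ∨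
           (∃ A : N, G.term A a ∧ α = pr A)}) :
    LG.Lang = G.Lang :=
  linear_to_lambek_general G LG hS hf
end
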